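/- Let (K, δ) be a differential field of characteristic zero with no element z ∈ K satisfying δ(z) = 1. Let L = K(w) be a purely transcendental extension with δ_L extending δ and δ_L(w) = 1. Let A_K and A_L denote the sets {a : δ(y) = nay has a nonzero solution in K (resp. L) for some n ∈ ℕ}. Then A_K = A_L ∩ K. -/

import Mathlib

/-!
Write a solution of `y′ = c y` in `K(X)` as `y = p / q`; clearing denominators gives
`p′ q = c p q + p q′` in `K[X]`. Because `X′` lies in `K`, the derivation of `K[X]` does not raise
degrees and acts on leading coefficients as the derivation of `K`, so the coefficients of degree
`deg p + deg q` show that `lc p / lc q` solves the same equation in `K`.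
-/

open Polynomial Differential

def Derivation.ofLeibniz {A : Type*} [CommRing A] (d : A → A)
    (hadd : ∀ a b, d (a + b) = d a + d b) (hmul : ∀ a b, d (a * b) = d a * b + a * d b) :
    Derivation ℤ A A :=
  Derivation.mk' (AddMonoidHom.mk' d hadd).toIntLinearMap fun a b => by
    simp only [AddMonoidHom.coe_toIntLinearMap, AddMonoidHom.mk'_apply, smul_eq_mul, hmul]
    ring

namespace Differential

section Polynomial

variable {A : Type*} [CommRing A] [Differential A]

lemma coeff_implicitDeriv_C (b : A) (p : A[X]) (k : ℕ) :
    (implicitDeriv (C b) p).coeff k = (p.coeff k)′ + b * (p.coeff (k + 1) * (k + 1)) := by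
  simp [implicitDeriv, coeff_derivative]

lemma natDegree_implicitDeriv_C_le (b : A) (p : A[X]) :
    (implicitDeriv (C b) p).natDegree ≤ p.natDegree := by
  refine natDegree_le_iff_coeff_eq_zero.mpr fun k hk => ?_
  rw [coeff_implicitDeriv_C, coeff_eq_zero_of_natDegree_lt hk,
    coeff_eq_zero_of_natDegree_lt (hk.trans (Nat.lt_succ_self k))]
  simp

lemma coeff_implicitDeriv_C_natDegree (b : A) (p : A[X]) :
    (implicitDeriv (C b) p).coeff p.natDegree = p.leadingCoeff′ := by
  simp [coeff_implicitDeriv_C, coeff_natDegree_succ_eq_zero]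

lemma deriv_leadingCoeff_of_implicitDeriv_C (b c : A) {p q : A[X]}
    (h : implicitDeriv (C b) p * q = C c * p * q + p * implicitDeriv (C b) q) :
    p.leadingCoeff′ * q.leadingCoeff =
      c * (p.leadingCoeff * q.leadingCoeff) + p.leadingCoeff * q.leadingCoeff′ := by
  have := congrArg (coeff · (p.natDegree + q.natDegree)) h
  simpa only [coeff_add, mul_assoc, coeff_C_mul, coeff_mul_degree_add_degree,
    coeff_mul_add_eq_of_natDegree_le (natDegree_implicitDeriv_C_le b p) le_rfl,
    coeff_mul_add_eq_of_natDegree_le le_rfl (natDegree_implicitDeriv_C_le b q),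
    coeff_implicitDeriv_C_natDegree, leadingCoeff] using this

end Polynomial

variable {K : Type*} [Field K] [Differential K]

lemma deriv_div_eq_mul_of_deriv_mul {c P Q : K} (hQ : Q ≠ 0)
    (h : P′ * Q = c * (P * Q) + P * Q′) : (P / Q)′ = c * (P / Q) := by
  rw [Derivation.leibniz_div, smul_eq_mul, smul_eq_mul, smul_eq_mul]
  field_simp
  linear_combination h

variable [Differential (RatFunc K)] [DifferentialAlgebra K (RatFunc K)]

lemma deriv_algebraMap_polynomial {b : K} (hX : (RatFunc.X : RatFunc K)′ = algebraMap K _ b)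
    (p : K[X]) :
    (algebraMap K[X] (RatFunc K) p)′ = algebraMap K[X] (RatFunc K) (implicitDeriv (C b) p) := by
  simpa only [RatFunc.aeval_X_left_eq_algebraMap] using
    deriv_aeval_eq_implicitDeriv RatFunc.X (C b) (hX.trans (aeval_C _ _).symm) p

theorem exists_deriv_eq_mul_iff_ratFunc {b : K} (hX : (RatFunc.X : RatFunc K)′ = algebraMap K _ b)
    (c : K) :
    (∃ y : K, y ≠ 0 ∧ y′ = c * y) ↔
      ∃ y : RatFunc K, y ≠ 0 ∧ y′ = algebraMap K _ c * y := by
  constructor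
  · rintro ⟨y, hy0, hy⟩
    exact ⟨algebraMap K _ y, by simpa using hy0, by rw [deriv_algebraMap, hy, map_mul]⟩
  · rintro ⟨y, hy0, hy⟩
    have hden : algebraMap K[X] (RatFunc K) y.denom ≠ 0 :=
      RatFunc.algebraMap_ne_zero y.denom_ne_zero
    have hnum : algebraMap K[X] (RatFunc K) y.num = y * algebraMap K[X] (RatFunc K) y.denom :=
      (div_eq_iff hden).mp (RatFunc.num_div_denom y)
    have hpoly : implicitDeriv (C b) y.num * y.denom =
        C c * y.num * y.denom + y.num * implicitDeriv (C b) y.denom := by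
      apply RatFunc.algebraMap_injective K
      simp only [map_mul, map_add, ← deriv_algebraMap_polynomial hX, RatFunc.algebraMap_C,
        ← RatFunc.algebraMap_eq_C, hnum, Derivation.leibniz, smul_eq_mul, hy]
      ring
    refine ⟨y.num.leadingCoeff / y.denom.leadingCoeff, ?_, ?_⟩
    · simp [RatFunc.num_ne_zero hy0, y.denom_ne_zero]
    · exact deriv_div_eq_mul_of_deriv_mul (by simp [y.denom_ne_zero])
        (deriv_leadingCoeff_of_implicitDeriv_C b c hpoly)

end Differential

theorem stmt13_general {K : Type*} [Field K]
    (δ : K → K)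
    (hadd : ∀ a b : K, δ (a + b) = δ a + δ b)
    (hmul : ∀ a b : K, δ (a * b) = δ a * b + a * δ b)
    (δL : RatFunc K → RatFunc K)
    (hLadd : ∀ x y : RatFunc K, δL (x + y) = δL x + δL y)
    (hLmul : ∀ x y : RatFunc K, δL (x * y) = δL x * y + x * δL y)
    (hLcomp : ∀ a : K, δL (algebraMap K (RatFunc K) a) = algebraMap K (RatFunc K) (δ a))
    (hw : δL RatFunc.X = 1) :
    ∀ a : K,
      (∃ n : ℕ, 0 < n ∧ ∃ y : K, y ≠ 0 ∧ δ y = (n : K) * a * y) ↔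
        (∃ n : ℕ, 0 < n ∧ ∃ y : RatFunc K, y ≠ 0 ∧
          δL y = (n : RatFunc K) * algebraMap K (RatFunc K) a * y) := by
  let _ : Differential K := ⟨Derivation.ofLeibniz δ hadd hmul⟩
  let _ : Differential (RatFunc K) := ⟨Derivation.ofLeibniz δL hLadd hLmul⟩
  have _ : DifferentialAlgebra K (RatFunc K) := ⟨hLcomp⟩
  have hX : (RatFunc.X : RatFunc K)′ = algebraMap K _ 1 := by rw [map_one]; exact hw
  intro a
  refine exists_congr fun n => and_congr_right fun _ => ?_
  have key := exists_deriv_eq_mul_iff_ratFunc hX ((n : K) * a)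
  rw [map_mul, map_natCast] at key
  exact key

/-- Let `(K, δ)` be a differential field of characteristic zero with no `z ∈ K`
satisfying `δ(z) = 1`, and let `L = K(w)` be the rational function field with the derivation
`δ_L` extending `δ` and `δ_L(w) = 1`. Then `A_K = A_L ∩ K`, where
`A_K = {a : δ(y) = n a y has a nonzero solution in K for some n ≥ 1}` and similarly for `A_L`. -/
theorem stmt13 {K : Type*} [Field K] [CharZero K]
    (δ : K → K)
    (hadd : ∀ a b : K, δ (a + b) = δ a + δ b)
    (hmul : ∀ a b : K, δ (a * b) = δ a * b + a * δ b)
    (hno1 : ∀ z : K, δ z ≠ 1)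
    (δL : RatFunc K → RatFunc K)
    (hLadd : ∀ x y : RatFunc K, δL (x + y) = δL x + δL y)
    (hLmul : ∀ x y : RatFunc K, δL (x * y) = δL x * y + x * δL y)
    (hLcomp : ∀ a : K, δL (algebraMap K (RatFunc K) a) = algebraMap K (RatFunc K) (δ a))
    (hw : δL RatFunc.X = 1) :
    ∀ a : K,
      (∃ n : ℕ, 0 < n ∧ ∃ y : K, y ≠ 0 ∧ δ y = (n : K) * a * y) ↔
        (∃ n : ℕ, 0 < n ∧ ∃ y : RatFunc K, y ≠ 0 ∧
          δL y = (n : RatFunc K) * algebraMap K (RatFunc K) a * y) :=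
  stmt13_general δ hadd hmul δL hLadd hLmul hLcomp hw
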